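/- arXiv:1812.11305 — 3 statements merged into one kernel-verified Lean document; each statement's English description precedes it below -/
import Mathlib

section
/- Suppose nonnegative reals a_k satisfy a_{k+1} ≤ m·a_k + n·a_{k-1} for k ≥ 1 with m, n ≥ 0, and a_1 ≤ (1 - 2rμ + r²L²)a_0 where 0 ≤ 1 - 2rμ + r²L² ≤ z and z = (m + √(m²+4n))/2 < 1. Then a_k ≤ z^{k}(1+z-m)a_0 for all k, and a_k → 0. -/
theorem stmt_8 (m n r μ L : ℝ) (hm : 0 ≤ m) (hn : 0 ≤ n)
    (z : ℝ) (hz : z = (m + Real.sqrt (m ^ 2 + 4 * n)) / 2) (hz1 : z < 1)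
    (a : ℕ → ℝ) (ha : ∀ k, 0 ≤ a k)
    (hrec : ∀ k, 1 ≤ k → a (k + 1) ≤ m * a k + n * a (k - 1))
    (hc0 : 0 ≤ 1 - 2 * r * μ + r ^ 2 * L ^ 2)
    (hcz : 1 - 2 * r * μ + r ^ 2 * L ^ 2 ≤ z)
    (ha1 : a 1 ≤ (1 - 2 * r * μ + r ^ 2 * L ^ 2) * a 0) :
    (∀ k, 1 ≤ k → a k ≤ z ^ k * (1 + z - m) * a 0) ∧
    Filter.Tendsto a Filter.atTop (nhds 0) := by
  have hns : (0:ℝ) ≤ m ^ 2 + 4 * n := by positivity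
  have hs0 : 0 ≤ Real.sqrt (m ^ 2 + 4 * n) := Real.sqrt_nonneg _
  have hs2 : Real.sqrt (m ^ 2 + 4 * n) ^ 2 = m ^ 2 + 4 * n := Real.sq_sqrt hns
  have hmz : m ≤ z := by rw [hz]; nlinarith
  have hz0 : 0 ≤ z := le_trans hm hmz
  have hzz : z ^ 2 = m * z + n := by rw [hz]; nlinarith
  have hC : 1 ≤ 1 + z - m := by linarith
  have key : ∀ k, a k ≤ z ^ k * (1 + z - m) * a 0 := by
    intro k
    induction k using Nat.strong_induction_on with
    | _ k ih =>
      match k with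
      | 0 =>
        have := ha 0
        simp only [pow_zero, one_mul]
        nlinarith
      | 1 =>
        have h0 := ha 0
        have h1 : a 1 ≤ z * a 0 :=
          le_trans ha1 (mul_le_mul_of_nonneg_right hcz h0)
        have h2 : z * a 0 ≤ z * (1 + z - m) * a 0 := by nlinarith
        simpa [pow_one] using le_trans h1 h2
      | (k+2) =>
        have h1 := hrec (k+1) (by omega)
        have hk1 := ih (k+1) (by omega)
        have hk := ih k (by omega)
        have e1 : a (k + 1 + 1) ≤ m * a (k+1) + n * a k := by simpa using h1
        have e2 : m * a (k+1) + n * a k ≤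
            m * (z ^ (k+1) * (1 + z - m) * a 0) + n * (z ^ k * (1 + z - m) * a 0) := by
          have := mul_le_mul_of_nonneg_left hk1 hm
          have := mul_le_mul_of_nonneg_left hk hn
          linarith
        have e3 : m * (z ^ (k+1) * (1 + z - m) * a 0) + n * (z ^ k * (1 + z - m) * a 0)
            = z ^ (k+2) * (1 + z - m) * a 0 := by
          have : z ^ (k+2) = z ^ k * (m * z + n) := by rw [← hzz]; ring
          rw [this, pow_succ]; ring
        calc a (k+2) = a (k+1+1) := by norm_num
          _ ≤ _ := e1
          _ ≤ _ := e2
          _ = _ := e3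
  refine ⟨fun k _ => key k, ?_⟩
  have hg : Filter.Tendsto (fun k => z ^ k * (1 + z - m) * a 0) Filter.atTop (nhds 0) := by
    have := (tendsto_pow_atTop_nhds_zero_of_lt_one hz0 hz1).mul_const ((1 + z - m) * a 0)
    simpa [mul_assoc] using this
  exact squeeze_zero ha key hg
end

section
/- For 0 < r < 2μ/L², μ ≤ L, and 0 < α < (-p + √(p² + 16q))/8 where p = 4 + 4r + rL², q = 2rμ - r²L², set m = 1 + 3α + 2rα + 2α² + rαL² + r²L² - 2rμ and n = α + 2rα + 2α². Then m + n < 1. -/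
theorem quadratic_neg_iff_sq_lt_discrim {R : Type*} [CommRing R] [LinearOrder R]
    [IsStrictOrderedRing R] {a b c : R} (ha : 0 < a) (x : R) :
    a * (x * x) + b * x + c < 0 ↔ (2 * a * x + b) ^ 2 < discrim a b c := by
  have key : (2 * a * x + b) ^ 2 - discrim a b c = 4 * a * (a * (x * x) + b * x + c) := by
    rw [discrim]; ring
  rw [← sub_neg (a := (2 * a * x + b) ^ 2), key]
  exact ⟨mul_neg_of_pos_of_neg (by positivity), (neg_of_mul_neg_right · (by positivity))⟩

theorem quadratic_neg_of_lt_root {a b c x : ℝ} (ha : 0 < a) (hvertex : -b / (2 * a) ≤ x)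
    (hroot : x < (-b + √(discrim a b c)) / (2 * a)) :
    a * (x * x) + b * x + c < 0 := by
  have h2a : 0 < 2 * a := by positivity
  rw [div_le_iff₀ h2a] at hvertex
  rw [lt_div_iff₀ h2a] at hroot
  rw [quadratic_neg_iff_sq_lt_discrim ha]
  have hsqrt : 2 * a * x + b < √(discrim a b c) := by linarith
  have hdiscrim : 0 < discrim a b c := Real.sqrt_pos.mp (by linarith)
  calc (2 * a * x + b) ^ 2 < √(discrim a b c) ^ 2 := by gcongr; linarith
    _ = discrim a b c := Real.sq_sqrt hdiscrim.le

theorem stmt_9_general (r μ L α : ℝ)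
    (hr : 0 < r) (hα : 0 < α)
    (hα2 : α < (-(4 + 4 * r + r * L ^ 2) +
        Real.sqrt ((4 + 4 * r + r * L ^ 2) ^ 2 + 16 * (2 * r * μ - r ^ 2 * L ^ 2))) / 8) :
    (1 + 3 * α + 2 * r * α + 2 * α ^ 2 + r * α * L ^ 2 + r ^ 2 * L ^ 2 - 2 * r * μ) +
      (α + 2 * r * α + 2 * α ^ 2) < 1 := by
  set p := 4 + 4 * r + r * L ^ 2
  set q := 2 * r * μ - r ^ 2 * L ^ 2
  -- `m + n - 1 = 4α² + pα - q`, and the bound on `α` is the larger root of `4t² + pt - q`.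
  have hdiscrim : discrim 4 p (-q) = p ^ 2 + 16 * q := by rw [discrim]; ring
  have hp : 0 < p := by positivity
  have hneg : 4 * (α * α) + p * α + -q < 0 := by
    refine quadratic_neg_of_lt_root (by norm_num) ?_ ?_
    · rw [div_le_iff₀ (by norm_num)]; linarith
    · rw [hdiscrim]; linarith
  linarith

theorem stmt_9 (r μ L α : ℝ) (hμ : 0 < μ) (hμL : μ ≤ L)
    (hr : 0 < r) (hr2 : r < 2 * μ / L ^ 2) (hα : 0 < α)
    (hα2 : α < (-(4 + 4 * r + r * L ^ 2) +
        Real.sqrt ((4 + 4 * r + r * L ^ 2) ^ 2 + 16 * (2 * r * μ - r ^ 2 * L ^ 2))) / 8) :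
    (1 + 3 * α + 2 * r * α + 2 * α ^ 2 + r * α * L ^ 2 + r ^ 2 * L ^ 2 - 2 * r * μ) +
      (α + 2 * r * α + 2 * α ^ 2) < 1 :=
  stmt_9_general r μ L α hr hα hα2
end

section
/- Let α, r > 0, μ ≤ L, 0 < r < 2μ/L². Consider the momentum recursion θ_{k+1} = θ_k + α(θ_k - θ_{k-1}) - r∇f(θ_k) with f μ-strongly convex and L-smooth, minimizer θ*. Then ‖θ_{k+1} - θ*‖² ≤ m‖θ_k - θ*‖² + n‖θ_{k-1} - θ*‖² with m = 1 + 3α + 2rα + 2α² + rαL² + r²L² - 2rμ and n = α + 2rα + 2α². -/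
/-!
Write `a = θ_k - θ*`, `c = θ_{k-1} - θ*` and `g = ∇f(θ_k)`. Since `∇f(θ*) = 0`, the error obeys
`θ_{k+1} - θ* = (1 + α) a - α c - r g`, strong convexity gives `⟪g, a⟫ ≥ μ ‖a‖²` and smoothness
gives `‖g‖ ≤ L ‖a‖`. Expanding the square, the cross terms `⟪a, c⟫` and `⟪c, g⟫` are absorbed by
`2 |⟪x, y⟫| ≤ ‖x‖² + ‖y‖²`, the term in `⟪a, g⟫` is bounded by coercivity and `‖g‖²` by smoothness.
-/

open RealInnerProductSpace

section

variable {E : Type*} [NormedAddCommGroup E] [InnerProductSpace ℝ E]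

lemma two_mul_real_inner_le_norm_sq_add_norm_sq (x y : E) :
    2 * ⟪x, y⟫ ≤ ‖x‖ ^ 2 + ‖y‖ ^ 2 := by
  nlinarith [norm_sub_sq_real x y, sq_nonneg ‖x - y‖]

lemma neg_two_mul_real_inner_le_norm_sq_add_norm_sq (x y : E) :
    -(2 * ⟪x, y⟫) ≤ ‖x‖ ^ 2 + ‖y‖ ^ 2 := by
  nlinarith [norm_add_sq_real x y, sq_nonneg ‖x + y‖]

lemma norm_sq_smul_sub_smul_sub_smul (p q r : ℝ) (a c g : E) :
    ‖p • a - q • c - r • g‖ ^ 2 =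
      p ^ 2 * ‖a‖ ^ 2 + q ^ 2 * ‖c‖ ^ 2 + r ^ 2 * ‖g‖ ^ 2
        - 2 * p * q * ⟪a, c⟫ - 2 * p * r * ⟪a, g⟫ + 2 * q * r * ⟪c, g⟫ := by
  simp only [← real_inner_self_eq_norm_sq, inner_sub_left, inner_sub_right,
    real_inner_smul_left, real_inner_smul_right, real_inner_comm a c, real_inner_comm a g,
    real_inner_comm c g]
  ring

lemma norm_sq_heavyBall_step_le {μ L r α : ℝ} (hμ : 0 ≤ μ) (hα : 0 ≤ α) (hr : 0 ≤ r)
    {a c g : E} (hcoer : μ * ‖a‖ ^ 2 ≤ ⟪a, g⟫) (hlip : ‖g‖ ≤ L * ‖a‖) :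
    ‖(1 + α) • a - α • c - r • g‖ ^ 2 ≤
      (1 + 3 * α + 2 * r * α + 2 * α ^ 2 + r * α * L ^ 2 + r ^ 2 * L ^ 2 - 2 * r * μ) *
          ‖a‖ ^ 2 +
        (α + 2 * r * α + 2 * α ^ 2) * ‖c‖ ^ 2 := by
  have hac := neg_two_mul_real_inner_le_norm_sq_add_norm_sq a c
  have hcg := two_mul_real_inner_le_norm_sq_add_norm_sq c g
  have hg : ‖g‖ ^ 2 ≤ L ^ 2 * ‖a‖ ^ 2 := by
    rw [← mul_pow]
    exact pow_le_pow_left₀ (norm_nonneg g) hlip 2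
  rw [norm_sq_smul_sub_smul_sub_smul]
  have hαa : 0 ≤ (1 + α) * α := by positivity
  have hra : 0 ≤ (1 + α) * r := by positivity
  have hαr : 0 ≤ α * r := by positivity
  have hrr : 0 ≤ r * (r + α) := by positivity
  -- the estimate gives the constants `m - 2rα(1 + μ)` and `n - rα`; the last three terms cover the slack
  linarith [mul_le_mul_of_nonneg_left hac hαa, mul_le_mul_of_nonneg_left hcoer hra,
    mul_le_mul_of_nonneg_left hcg hαr, mul_le_mul_of_nonneg_left hg hrr,
    mul_nonneg (mul_nonneg hαr hμ) (sq_nonneg ‖a‖), mul_nonneg hαr (sq_nonneg ‖a‖),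
    mul_nonneg hαr (sq_nonneg ‖c‖)]

end

theorem stmt_13_general {d : ℕ} (f : EuclideanSpace ℝ (Fin d) → ℝ) (μ L r α : ℝ)
    (hμ : 0 < μ) (hα : 0 < α)
    (hr : 0 < r)
    (hsc : ∀ x y, ⟪gradient f x - gradient f y, x - y⟫ ≥ μ * ‖x - y‖ ^ 2)
    (hL : ∀ x y, ‖gradient f x - gradient f y‖ ≤ L * ‖x - y‖)
    (θs : EuclideanSpace ℝ (Fin d)) (hstat : gradient f θs = 0)
    (θ : ℕ → EuclideanSpace ℝ (Fin d))
    (hrec : ∀ k, 1 ≤ k →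
      θ (k + 1) = θ k + α • (θ k - θ (k - 1)) - r • gradient f (θ k)) :
    ∀ k, 1 ≤ k →
      ‖θ (k + 1) - θs‖ ^ 2 ≤
        (1 + 3 * α + 2 * r * α + 2 * α ^ 2 + r * α * L ^ 2 + r ^ 2 * L ^ 2 - 2 * r * μ) *
          ‖θ k - θs‖ ^ 2 +
        (α + 2 * r * α + 2 * α ^ 2) * ‖θ (k - 1) - θs‖ ^ 2 := by
  intro k hk
  have herr : θ (k + 1) - θs =
      (1 + α) • (θ k - θs) - α • (θ (k - 1) - θs) - r • gradient f (θ k) := by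
    rw [hrec k hk]
    module
  have hcoer : μ * ‖θ k - θs‖ ^ 2 ≤ ⟪θ k - θs, gradient f (θ k)⟫ := by
    simpa [hstat, real_inner_comm] using hsc (θ k) θs
  have hlip : ‖gradient f (θ k)‖ ≤ L * ‖θ k - θs‖ := by
    simpa [hstat] using hL (θ k) θs
  rw [herr]
  exact norm_sq_heavyBall_step_le hμ.le hα.le hr.le hcoer hlip

theorem stmt_13 {d : ℕ} (f : EuclideanSpace ℝ (Fin d) → ℝ) (μ L r α : ℝ)
    (hμ : 0 < μ) (hμL : μ ≤ L) (hα : 0 < α)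
    (hr : 0 < r) (hr2 : r < 2 * μ / L ^ 2)
    (hdiff : Differentiable ℝ f)
    (hsc : ∀ x y, ⟪gradient f x - gradient f y, x - y⟫ ≥ μ * ‖x - y‖ ^ 2)
    (hL : ∀ x y, ‖gradient f x - gradient f y‖ ≤ L * ‖x - y‖)
    (θs : EuclideanSpace ℝ (Fin d)) (hstat : gradient f θs = 0)
    (θ : ℕ → EuclideanSpace ℝ (Fin d))
    (hrec : ∀ k, 1 ≤ k →
      θ (k + 1) = θ k + α • (θ k - θ (k - 1)) - r • gradient f (θ k)) :
    ∀ k, 1 ≤ k →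
      ‖θ (k + 1) - θs‖ ^ 2 ≤
        (1 + 3 * α + 2 * r * α + 2 * α ^ 2 + r * α * L ^ 2 + r ^ 2 * L ^ 2 - 2 * r * μ) *
          ‖θ k - θs‖ ^ 2 +
        (α + 2 * r * α + 2 * α ^ 2) * ‖θ (k - 1) - θs‖ ^ 2 :=
  stmt_13_general f μ L r α hμ hα hr hsc hL θs hstat θ hrec
end
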